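/- arXiv:1111.2448 — 6 statements merged into one kernel-verified Lean document; each statement's English description precedes it below -/
import Mathlib

section
/- Let G be a group and K ≤ G a retract of G (i.e., there is a homomorphism ρ : G → G with image K such that ρ restricted to K is the identity). If g ∈ G satisfies gKg⁻¹ ⊆ K, then gKg⁻¹ = K. -/
/-- If `K` is a retract of a group `G` (via a retraction `ρ : G → G` with image `K`
restricting to the identity on `K`) and `g ∈ G` satisfies `gKg⁻¹ ⊆ K`,
then `gKg⁻¹ = K`. -/
theorem stmt_2 {G : Type*} [Group G] (K : Subgroup G) (ρ : G →* G)
    (hrange : ρ.range = K) (hid : ∀ k ∈ K, ρ k = k) (g : G)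
    (hsub : (fun x => g * x * g⁻¹) '' (K : Set G) ⊆ (K : Set G)) :
    (fun x => g * x * g⁻¹) '' (K : Set G) = (K : Set G) := by
  apply Set.Subset.antisymm hsub
  intro k hk
  have hh : ρ g ∈ K := hrange ▸ ⟨g, rfl⟩
  set x := (ρ g)⁻¹ * k * ρ g with hx
  have hxK : x ∈ K := K.mul_mem (K.mul_mem (K.inv_mem hh) hk) hh
  refine ⟨x, hxK, ?_⟩
  have hmem : g * x * g⁻¹ ∈ K := hsub ⟨x, hxK, rfl⟩
  have h1 : ρ (g * x * g⁻¹) = g * x * g⁻¹ := hid _ hmem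
  have h2 : ρ (g * x * g⁻¹) = ρ g * x * (ρ g)⁻¹ := by
    simp [map_mul, hid x hxK]
  have : g * x * g⁻¹ = ρ g * x * (ρ g)⁻¹ := by rw [← h1, h2]
  show g * x * g⁻¹ = k
  rw [this, hx]
  group
end

section
/- Let G be a group acting on a tree by isometries, and suppose an end e of the tree is fixed by G. Then the set N of elements of G fixing some vertex of the tree is a normal subgroup of G. -/
/-!
Since `g` fixes the end, it moves the ray `r` by a shift: `g • r (n + k) = r (n + m)`. If `g` also
fixes a vertex `v`, then, `g` being an isometry, `d(v, r (n + k)) = d(v, r (n + m))` for all `n`;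
in a tree `d(v, r n) → ∞`, which forces `k = m`, so `g` fixes a tail of the ray. Two elliptic
elements therefore fix a common vertex far out on the ray, so their product is elliptic.
Conjugates of elliptic elements are elliptic, which gives normality.
-/

open Filter

namespace SimpleGraph

variable {V W : Type*} {G : SimpleGraph V} {G' : SimpleGraph W}

lemma edist_map_le (f : G →g G') (u v : V) : G'.edist (f u) (f v) ≤ G.edist u v := by
  by_cases h : G.Reachable u v
  · obtain ⟨p, hp⟩ := h.exists_walk_length_eq_edist
    rw [← hp, ← p.length_map f]
    exact edist_le _
  · simp [edist_eq_top_of_not_reachable h]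

lemma Iso.edist_eq (f : G ≃g G') (u v : V) : G'.edist (f u) (f v) = G.edist u v :=
  le_antisymm (edist_map_le f.toHom u v) <| by
    simpa using edist_map_le f.symm.toHom (f u) (f v)

lemma Iso.dist_eq (f : G ≃g G') (u v : V) : G'.dist (f u) (f v) = G.dist u v := by
  simp only [dist, f.edist_eq]

lemma IsAcyclic.dist_eq_length_of_isPath (hG : G.IsAcyclic) {u v : V} {p : G.Walk u v}
    (hp : p.IsPath) : G.dist u v = p.length := by
  obtain ⟨q, hq, hlen⟩ := p.reachable.exists_path_of_dist
  have : (⟨q, hq⟩ : G.Path u v) = ⟨p, hp⟩ := (hG.subsingleton_path u v).elim _ _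
  rw [← hlen, show q = p from congrArg Subtype.val this]

section Ray

variable (r : ℕ → V) (hray : ∀ n, G.Adj (r n) (r (n + 1)))

def rayWalk : ∀ n, G.Walk (r 0) (r n)
  | 0 => .nil
  | n + 1 => (rayWalk n).concat (hray n)

lemma support_rayWalk (n : ℕ) : (rayWalk r hray n).support = (List.range (n + 1)).map r := by
  induction n with
  | zero => rfl
  | succ n ih =>
    rw [rayWalk, Walk.support_concat, ih, List.range_succ (n := n + 1), List.map_append]
    rfl

lemma length_rayWalk (n : ℕ) : (rayWalk r hray n).length = n := by
  have := congrArg List.length (support_rayWalk r hray n)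
  simpa using this

lemma isPath_rayWalk (hinj : Function.Injective r) (n : ℕ) : (rayWalk r hray n).IsPath := by
  rw [Walk.isPath_def, support_rayWalk]
  exact List.nodup_range.map hinj

end Ray

lemma IsAcyclic.dist_ray (hG : G.IsAcyclic) {r : ℕ → V} (hray : ∀ n, G.Adj (r n) (r (n + 1)))
    (hinj : Function.Injective r) (n : ℕ) : G.dist (r 0) (r n) = n := by
  rw [hG.dist_eq_length_of_isPath (isPath_rayWalk r hray hinj n), length_rayWalk]

lemma IsTree.tendsto_dist_ray (hG : G.IsTree) {r : ℕ → V}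
    (hray : ∀ n, G.Adj (r n) (r (n + 1))) (hinj : Function.Injective r) (v : V) :
    Tendsto (fun n => G.dist v (r n)) atTop atTop := by
  refine tendsto_atTop_atTop.mpr fun b => ⟨b + G.dist (r 0) v, fun n hn => ?_⟩
  have := hG.connected.dist_triangle (u := r 0) (v := v) (w := r n)
  rw [hG.isAcyclic.dist_ray hray hinj] at this
  omega

end SimpleGraph

lemma Nat.eq_of_tendsto_atTop_of_add_eq {f : ℕ → ℕ} (hf : Tendsto f atTop atTop) {k m : ℕ}
    (h : ∀ n, f (n + k) = f (n + m)) : k = m := by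
  by_contra hne
  wlog hkm : k < m generalizing k m
  · exact this (fun n => (h n).symm) (Ne.symm hne) (by omega)
  have periodic : ∀ j, f (j * (m - k) + k) = f k := by
    intro j
    induction j with
    | zero => simp
    | succ j ih =>
      calc f ((j + 1) * (m - k) + k) = f (j * (m - k) + m) := by
            rw [add_one_mul, add_assoc, Nat.sub_add_cancel hkm.le]
        _ = f k := by rw [← h, ih]
  obtain ⟨N, hN⟩ := eventually_atTop.mp (hf.eventually_gt_atTop (f k))
  have := hN (N * (m - k) + k)
    (Nat.le_add_right_of_le (Nat.le_mul_of_pos_right N (Nat.sub_pos_of_lt hkm)))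
  rw [periodic] at this
  exact this.false

section Elliptic

variable {G V : Type*} [Group G] [MulAction G V]

def ellipticSubgroup [Nonempty V]
    (hmul : ∀ a b : G, (∃ v : V, a • v = v) → (∃ v : V, b • v = v) →
      ∃ v : V, (a * b) • v = v) :
    Subgroup G where
  carrier := {g | ∃ v : V, g • v = v}
  mul_mem' := hmul _ _
  one_mem' := ⟨Classical.arbitrary V, one_smul G _⟩
  inv_mem' := fun ⟨v, hv⟩ => ⟨v, inv_smul_eq_iff.mpr hv.symm⟩

instance ellipticSubgroup.normal [Nonempty V]
    (hmul : ∀ a b : G, (∃ v : V, a • v = v) → (∃ v : V, b • v = v) →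
      ∃ v : V, (a * b) • v = v) :
    (ellipticSubgroup hmul).Normal where
  conj_mem _ := fun ⟨v, hv⟩ g => ⟨g • v, by rw [mul_smul, mul_smul, inv_smul_smul, hv]⟩

end Elliptic

section TreeAction

variable {G V : Type*} [Group G] [MulAction G V] {T : SimpleGraph V}

def SimpleGraph.isoOfSMul (hact : ∀ (g : G) (u v : V), T.Adj u v → T.Adj (g • u) (g • v))
    (g : G) : T ≃g T where
  toEquiv := MulAction.toPerm g
  map_rel_iff' := ⟨fun h => by simpa using hact g⁻¹ _ _ h, hact g _ _⟩

lemma SimpleGraph.IsTree.smul_ray_add_eq_self (htree : T.IsTree)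
    (hact : ∀ (g : G) (u v : V), T.Adj u v → T.Adj (g • u) (g • v))
    {r : ℕ → V} (hray : ∀ n, T.Adj (r n) (r (n + 1))) (hinj : Function.Injective r)
    {g : G} {k m : ℕ} (hshift : ∀ n, g • r (n + k) = r (n + m)) {v : V} (hv : g • v = v) :
    ∀ n, g • r (n + k) = r (n + k) := by
  suffices k = m by simpa [this] using hshift
  refine Nat.eq_of_tendsto_atTop_of_add_eq (htree.tendsto_dist_ray hray hinj v) fun n => ?_
  calc T.dist v (r (n + k)) = T.dist (g • v) (g • r (n + k)) :=
        ((SimpleGraph.isoOfSMul hact g).dist_eq _ _).symm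
    _ = T.dist v (r (n + m)) := by rw [hv, hshift]

end TreeAction

/-- Let a group `G` act on a (simplicial) tree `T` by graph automorphisms, and suppose an
end of `T` — represented by a ray `r` — is fixed by `G` (every `g ∈ G` maps `r` to a ray
which eventually coincides with `r`).  Then the set of elements of `G` fixing some vertex
of `T` is (the underlying set of) a normal subgroup of `G`. -/
theorem stmt_6 {G V : Type*} [Group G] [MulAction G V]
    (T : SimpleGraph V) (htree : T.IsTree)
    (hact : ∀ (g : G) (u v : V), T.Adj u v → T.Adj (g • u) (g • v))
    (r : ℕ → V) (hray : ∀ n, T.Adj (r n) (r (n + 1))) (hinj : Function.Injective r)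
    (hend : ∀ g : G, ∃ k m : ℕ, ∀ n : ℕ, g • r (n + k) = r (n + m)) :
    ∃ N : Subgroup G, N.Normal ∧ (N : Set G) = {g : G | ∃ v : V, g • v = v} := by
  have : Nonempty V := ⟨r 0⟩
  have fixes_tail (g : G) (hg : ∃ v : V, g • v = v) :
      ∃ k, ∀ n, g • r (n + k) = r (n + k) := by
    obtain ⟨v, hv⟩ := hg
    obtain ⟨k, m, hshift⟩ := hend g
    exact ⟨k, htree.smul_ray_add_eq_self hact hray hinj hshift hv⟩
  have hmul (a b : G) (ha : ∃ v : V, a • v = v) (hb : ∃ v : V, b • v = v) :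
      ∃ v : V, (a * b) • v = v := by
    obtain ⟨ka, hka⟩ := fixes_tail a ha
    obtain ⟨kb, hkb⟩ := fixes_tail b hb
    exact ⟨r (ka + kb), by rw [mul_smul, hkb ka, add_comm, hka kb]⟩
  exact ⟨ellipticSubgroup hmul, inferInstance, rfl⟩
end

section
/- Let F be a free group and N ⊴ F a nontrivial finitely generated normal subgroup. Then N has finite index in F. -/
/-
Write `N = ⟨S⟩` and follow the path that a word traces in the coset space `F ⧸ N`, starting at
the trivial coset. Every `n ∈ N` is a product of elements of `S ∪ S⁻¹`; their concatenated words
return to the trivial coset after each factor, and free reduction only deletes steps of the path,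
so the reduced word of `n` visits only cosets visited by the finitely many words of `S ∪ S⁻¹`.
If `F` has at least two generators, then for `1 ≠ w ∈ N` and any `g` there is a letter `t` such
that `g t w t⁻¹ g⁻¹ ∈ N` is reduced as written, so its path passes through the coset of `g`.
Hence there are only finitely many cosets. If `F` has rank at most one it is cyclic, and every
nontrivial subgroup of a cyclic group has finite index.
-/

open scoped Pointwise

theorem List.prefix_append_iff {β : Type*} {P L₁ L₂ : List β} :
    P <+: L₁ ++ L₂ ↔ P <+: L₁ ∨ ∃ Q, Q <+: L₂ ∧ P = L₁ ++ Q := by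
  constructor
  · rintro ⟨R, hR⟩
    rcases List.append_eq_append_iff.mp hR with ⟨A, rfl, -⟩ | ⟨B, rfl, hB⟩
    · exact .inl (List.prefix_append _ _)
    · exact .inr ⟨B, ⟨R, hB.symm⟩, rfl⟩
  · rintro (h | ⟨Q, hQ, rfl⟩)
    · exact h.trans (List.prefix_append _ _)
    · exact (List.prefix_append_right_inj L₁).mpr hQ

theorem Subgroup.finiteIndex_of_ne_bot_of_isCyclic {G : Type*} [Group G] [IsCyclic G]
    {H : Subgroup G} (hH : H ≠ ⊥) : H.FiniteIndex := by
  have := H.normal_of_isMulCommutative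
  obtain ⟨a, ha⟩ := IsCyclic.exists_generator (α := G)
  obtain ⟨x, hxH, hx1⟩ := H.bot_or_exists_ne_one.resolve_left hH
  obtain ⟨m, rfl⟩ := Subgroup.mem_zpowers_iff.mp (ha x)
  have hm : m ≠ 0 := by rintro rfl; exact hx1 (zpow_zero a)
  have ha_fin : IsOfFinOrder (a : G ⧸ H) := isOfFinOrder_iff_zpow_eq_one.mpr
    ⟨m, hm, by rwa [← QuotientGroup.mk_zpow, QuotientGroup.eq_one_iff]⟩
  have : Finite (G ⧸ H) := Set.finite_univ_iff.mp <| ha_fin.finite_zpowers.subset fun q _ => by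
    obtain ⟨g, rfl⟩ := QuotientGroup.mk_surjective q
    obtain ⟨k, rfl⟩ := Subgroup.mem_zpowers_iff.mp (ha g)
    exact ⟨k, (QuotientGroup.mk_zpow H a k).symm⟩
  exact Subgroup.finiteIndex_of_finite_quotient

namespace FreeGroup

variable {α : Type*}

instance [Subsingleton α] : IsCyclic (FreeGroup α) := by
  obtain ⟨g, hg⟩ : ∃ g : FreeGroup α, Set.range of ⊆ {g} := by
    rcases (Set.subsingleton_range (of (α := α))).eq_empty_or_singleton with h | ⟨g, h⟩
    · exact ⟨1, by simp [h]⟩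
    · exact ⟨g, h.le⟩
  refine isCyclic_iff_exists_zpowers_eq_top.mpr ⟨g, top_unique ?_⟩
  rw [← closure_range_of, Subgroup.zpowers_eq_closure]
  exact Subgroup.closure_mono hg

section ReducedWords

theorem exists_ne_inv_letter [Nontrivial α] (l : List (α × Bool)) (hl : l.length ≤ 3) :
    ∃ t : α × Bool, ∀ x ∈ l, t ≠ (x.1, !x.2) := by
  classical
  obtain ⟨a, b, hab⟩ := exists_pair_ne α
  have hcard : (l.map fun x => (x.1, !x.2)).toFinset.card <
      ({(a, true), (a, false), (b, true), (b, false)} : Finset (α × Bool)).card := by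
    calc _ ≤ (l.map fun x => (x.1, !x.2)).length := List.toFinset_card_le _
      _ < 4 := by rw [List.length_map]; omega
      _ = _ := by simp [Finset.card_insert_of_notMem, hab]
  obtain ⟨t, -, ht⟩ := Finset.exists_mem_notMem_of_card_lt_card hcard
  exact ⟨t, fun x hx h => ht (List.mem_toFinset.mpr (List.mem_map.mpr ⟨x, hx, h.symm⟩))⟩

theorem isReduced_append_singleton_append {L₁ L₂ : List (α × Bool)} {t : α × Bool}
    (h₁ : IsReduced L₁) (h₂ : IsReduced L₂) (ht₁ : ∀ x ∈ L₁.getLast?, t ≠ (x.1, !x.2))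
    (ht₂ : ∀ y ∈ L₂.head?, t ≠ (y.1, !y.2)) : IsReduced (L₁ ++ [t] ++ L₂) := by
  have no_cancel : ∀ x : α × Bool, t ≠ (x.1, !x.2) →
      (x.1 = t.1 → x.2 = t.2) ∧ (t.1 = x.1 → t.2 = x.2) := by
    clear ht₁ ht₂
    obtain ⟨c, d⟩ := t
    rintro ⟨a, b⟩ h
    cases b <;> cases d <;> simp_all [eq_comm]
  refine IsReduced.append_overlap (List.isChain_append.mpr ⟨h₁, IsReduced.singleton, ?_⟩)
    (List.isChain_append.mpr ⟨IsReduced.singleton, h₂, ?_⟩) (List.cons_ne_nil _ _)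
  · rintro x hx y ⟨⟩
    exact (no_cancel x (ht₁ x hx)).1
  · rintro x ⟨⟩ y hy
    exact (no_cancel y (ht₂ y hy)).2

variable [DecidableEq α]

theorem IsReduced.invRev {L : List (α × Bool)} (h : IsReduced L) : IsReduced (invRev L) :=
  isReduced_iff_reduce_eq.mpr (by rw [reduce_invRev, h.reduce_eq])

theorem toWord_mul_mul_inv_of_isReduced {u w : FreeGroup α}
    (h : IsReduced (u.toWord ++ w.toWord ++ invRev u.toWord)) :
    (u * w * u⁻¹).toWord = u.toWord ++ w.toWord ++ invRev u.toWord := by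
  conv_lhs => rw [← mk_toWord (x := u), ← mk_toWord (x := w), inv_mk, mul_mk, mul_mk]
  rw [toWord_mk, h.reduce_eq]

theorem exists_isPrefix_toWord_conj [Nontrivial α] {w : FreeGroup α} (hw : w ≠ 1)
    (g : FreeGroup α) : ∃ u : FreeGroup α, g.toWord <+: (u * w * u⁻¹).toWord := by
  set G := g.toWord
  set W := w.toWord
  have hW : W ≠ [] := fun h => hw (toWord_eq_nil_iff.mp h)
  obtain ⟨t, ht⟩ := exists_ne_inv_letter
    (G.getLast?.toList ++ W.head?.toList ++ (invRev W).head?.toList)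
    (by simp only [List.length_append]; grind [Option.length_toList_le])
  have hG : ∀ x ∈ G.getLast?, t ≠ (x.1, !x.2) :=
    fun x hx => ht x (by simp [Option.mem_def.mp hx])
  have hGW : IsReduced (G ++ [t] ++ W) :=
    isReduced_append_singleton_append isReduced_toWord isReduced_toWord hG
      fun y hy => ht y (by simp [Option.mem_def.mp hy])
  have hGW' : IsReduced (G ++ [t] ++ invRev W) :=
    isReduced_append_singleton_append isReduced_toWord isReduced_toWord.invRev hG
      fun y hy => ht y (by simp [Option.mem_def.mp hy])
  have hU : (mk (G ++ [t])).toWord = G ++ [t] := by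
    rw [toWord_mk, (hGW.infix ⟨[], W, by simp⟩).reduce_eq]
  have hWU : IsReduced (W ++ invRev (G ++ [t])) := by
    simpa only [invRev_append, invRev_invRev, List.append_assoc] using hGW'.invRev
  refine ⟨mk (G ++ [t]), ?_⟩
  rw [toWord_mul_mul_inv_of_isReduced, hU]
  · simp only [List.append_assoc, List.prefix_append]
  · rw [hU]
    exact IsReduced.append_overlap hGW hWU hW

end ReducedWords

section PrefixImages

variable {H : Type*} [Group H] (φ : FreeGroup α →* H)

def prefixImages (L : List (α × Bool)) : Set H :=
  {x | ∃ P, P <+: L ∧ φ (mk P) = x}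

variable {φ}

theorem finite_prefixImages (L : List (α × Bool)) : (prefixImages φ L).Finite :=
  (L.inits.map fun P => φ (mk P)).finite_toSet.subset fun _ ⟨P, hP, hx⟩ =>
    List.mem_map.mpr ⟨P, (List.mem_inits P L).mpr hP, hx⟩

theorem prefixImages_append_subset (L₁ L₂ : List (α × Bool)) :
    prefixImages φ (L₁ ++ L₂) ⊆ prefixImages φ L₁ ∪ φ (mk L₁) • prefixImages φ L₂ := by
  rintro _ ⟨P, hP, rfl⟩
  rcases List.prefix_append_iff.mp hP with hP | ⟨Q, hQ, rfl⟩
  · exact .inl ⟨P, hP, rfl⟩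
  · exact .inr ⟨φ (mk Q), ⟨Q, hQ, rfl⟩, by rw [← mul_mk, _root_.map_mul]; rfl⟩

theorem prefixImages_subset_of_step {L L' : List (α × Bool)} (h : Red.Step L L') :
    prefixImages φ L' ⊆ prefixImages φ L := by
  cases h with | @not L₁ L₂ x b => ?_
  rintro _ ⟨P, hP, rfl⟩
  rcases List.prefix_append_iff.mp hP with hP | ⟨Q, hQ, rfl⟩
  · exact ⟨P, hP.trans (List.prefix_append _ _), rfl⟩
  · refine ⟨L₁ ++ (x, b) :: (x, !b) :: Q, ?_, ?_⟩
    · simpa using hQ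
    · rw [Red.exact.mpr ⟨_, Red.Step.not.to_red, Red.refl⟩]

theorem prefixImages_subset_of_red {L L' : List (α × Bool)} (h : Red L L') :
    prefixImages φ L' ⊆ prefixImages φ L := by
  induction h with
  | refl => exact subset_rfl
  | tail _ hstep ih => exact (prefixImages_subset_of_step hstep).trans ih

variable [DecidableEq α]

theorem map_mem_prefixImages {g : FreeGroup α} {L : List (α × Bool)} (h : g.toWord <+: L) :
    φ g ∈ prefixImages φ L :=
  ⟨g.toWord, h, by rw [mk_toWord]⟩

theorem prefixImages_toWord_subset_of_mem_closure {T : Set (FreeGroup α)} (hT : T ⊆ φ.ker)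
    {n : FreeGroup α} (hn : n ∈ Submonoid.closure T) :
    prefixImages φ n.toWord ⊆ insert 1 (⋃ t ∈ T, prefixImages φ t.toWord) := by
  suffices ∃ L, mk L = n ∧ prefixImages φ L ⊆ insert 1 (⋃ t ∈ T, prefixImages φ t.toWord) by
    obtain ⟨L, rfl, hL⟩ := this
    exact (prefixImages_subset_of_red reduce.red).trans hL
  induction hn using Submonoid.closure_induction with
  | mem t ht => exact ⟨t.toWord, mk_toWord, (Set.subset_biUnion_of_mem
    (u := fun t => prefixImages φ t.toWord) ht).trans (Set.subset_insert _ _)⟩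
  | one => exact ⟨[], rfl, fun _ ⟨P, hP, hx⟩ =>
    .inl (by rw [← hx, List.prefix_nil.mp hP, ← one_eq_mk, _root_.map_one])⟩
  | mul _ _ hx _ ihx ihy =>
    obtain ⟨L₁, rfl, h₁⟩ := ihx
    obtain ⟨L₂, rfl, h₂⟩ := ihy
    have hφ : φ (mk L₁) = 1 := Submonoid.closure_le.mpr hT hx
    refine ⟨L₁ ++ L₂, mul_mk, (prefixImages_append_subset L₁ L₂).trans ?_⟩
    rw [hφ, one_smul]
    exact Set.union_subset h₁ h₂

theorem exists_finite_forall_prefixImages_subset {K : Subgroup (FreeGroup α)} (hK : K.FG)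
    (hKφ : K ≤ φ.ker) : ∃ V : Set H, V.Finite ∧ ∀ n ∈ K, prefixImages φ n.toWord ⊆ V := by
  obtain ⟨S, rfl⟩ := hK
  have hS : (S ∪ S⁻¹ : Set (FreeGroup α)) ⊆ φ.ker :=
    Set.union_subset (Subgroup.subset_closure.trans hKφ)
      fun s hs => hKφ (inv_mem_iff.mp (Subgroup.subset_closure hs))
  refine ⟨insert 1 (⋃ t ∈ (S ∪ S⁻¹ : Set (FreeGroup α)), prefixImages φ t.toWord),
    ((S.finite_toSet.union S.finite_toSet.inv).biUnion fun t _ => finite_prefixImages _).insert 1,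
    fun n hn => ?_⟩
  refine prefixImages_toWord_subset_of_mem_closure hS ?_
  rwa [← Subgroup.closure_toSubmonoid, Subgroup.mem_toSubmonoid]

end PrefixImages

theorem finite_quotient_of_fg_of_ne_bot [Nontrivial α] (N : Subgroup (FreeGroup α)) [N.Normal]
    (hN : N ≠ ⊥) (hfg : N.FG) : Finite (FreeGroup α ⧸ N) := by
  classical
  obtain ⟨w, hwN, hw⟩ := N.bot_or_exists_ne_one.resolve_left hN
  obtain ⟨V, hV, hNV⟩ := exists_finite_forall_prefixImages_subset hfg
    (QuotientGroup.ker_mk' N).ge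
  refine Set.finite_univ_iff.mp (hV.subset fun q _ => ?_)
  obtain ⟨g, rfl⟩ := QuotientGroup.mk'_surjective N q
  obtain ⟨u, hu⟩ := exists_isPrefix_toWord_conj hw g
  exact hNV _ (Subgroup.Normal.conj_mem ‹_› w hwN u) (map_mem_prefixImages hu)

end FreeGroup

/-- A nontrivial finitely generated normal subgroup of a free group has finite index. -/
theorem stmt_7 {α : Type*} (N : Subgroup (FreeGroup α)) [N.Normal]
    (hnt : N ≠ ⊥) (hfg : N.FG) : N.FiniteIndex := by
  rcases subsingleton_or_nontrivial α with _ | _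
  · exact Subgroup.finiteIndex_of_ne_bot_of_isCyclic hnt
  · have := FreeGroup.finite_quotient_of_fg_of_ne_bot N hnt hfg
    exact Subgroup.finiteIndex_of_finite_quotient
end

section
/- A group G is right orderable if and only if every nontrivial finitely generated subgroup of G admits a surjective homomorphism onto some nontrivial right orderable group. -/
/-- A group is right orderable if it admits a linear order invariant under right
multiplication. -/
def RightOrderable (G : Type*) [Group G] : Prop :=
  ∃ lo : LinearOrder G, ∀ a b c : G, lo.le a b → lo.le (a * c) (b * c)

/-!
A right order on `G` amounts to a subsemigroup `P` (the elements `> 1`) with `1 ∉ P` and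
`g ∈ P ∨ g⁻¹ ∈ P` for every `g ≠ 1`. Such a `P` exists as soon as one can choose a sign for each
`g ≠ 1` so that no nonempty product of the signed elements `g ^ (±1)` is trivial, and by
compactness of `Bool ^ G` it suffices to do this for every finite set `S` with `1 ∉ S`.
This goes by induction on `|S|`: a surjection `φ` of `⟨S⟩` onto a nontrivial right-ordered group
is nontrivial on some element of `S`. Sign the elements of `S` outside `ker φ` so that their images
are `> 1`, and the smaller set `S ∩ ker φ` by induction. A trivial product then has image `1`
under `φ`, so it only involves elements of `S ∩ ker φ`, which is impossible.
-/

universe u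

open Function

theorem RightOrderable.of_injective {H G : Type*} [Group H] [Group G] (f : H →* G)
    (hf : Injective f) (hG : RightOrderable G) : RightOrderable H := by
  obtain ⟨lo, hlo⟩ := hG
  let _ : LinearOrder G := lo
  exact ⟨LinearOrder.lift' f hf, fun a b c hab => by
    change f (a * c) ≤ f (b * c)
    simpa only [map_mul] using hlo _ _ (f c) hab⟩

theorem rightOrderable_of_positiveCone {G : Type*} [Group G] (P : Subsemigroup G)
    (one_notMem : (1 : G) ∉ P) (mem_or_inv_mem : ∀ g : G, g ≠ 1 → g ∈ P ∨ g⁻¹ ∈ P) :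
    RightOrderable G := by
  classical
  refine ⟨{ le := fun a b => a = b ∨ b * a⁻¹ ∈ P
            le_refl := fun a => Or.inl rfl
            le_trans := ?_
            le_antisymm := ?_
            le_total := ?_
            toDecidableLE := Classical.decRel _ }, ?_⟩
  · rintro a b c (rfl | hab) (rfl | hbc)
    · exact Or.inl rfl
    · exact Or.inr hbc
    · exact Or.inr hab
    · exact Or.inr (by simpa [mul_assoc] using mul_mem hbc hab)
  · rintro a b (rfl | hab) (hba | hba)
    · rfl
    · rfl
    · exact hba.symm
    · exact absurd (by simpa [mul_assoc] using mul_mem hab hba) one_notMem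
  · intro a b
    rcases eq_or_ne (b * a⁻¹) 1 with hab | hab
    · exact Or.inl (Or.inl (mul_inv_eq_one.mp hab).symm)
    · exact (mem_or_inv_mem _ hab).imp Or.inr fun h => Or.inr (by simpa using h)
  · rintro a b c (rfl | hab)
    · exact Or.inl rfl
    · exact Or.inr (by simpa [mul_assoc] using hab)

theorem Subsemigroup.exists_finset_subset_of_mem_closure {M : Type*} [Mul M] {s : Set M} {x : M}
    (hx : x ∈ closure s) : ∃ F : Finset M, ↑F ⊆ s ∧ x ∈ closure (F : Set M) := by
  classical
  induction hx using closure_induction with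
  | mem x hx => exact ⟨{x}, by simpa using hx, subset_closure (by simp)⟩
  | mul x y _ _ hx hy =>
    obtain ⟨F₁, hF₁, hxF₁⟩ := hx
    obtain ⟨F₂, hF₂, hyF₂⟩ := hy
    refine ⟨F₁ ∪ F₂, by simpa using ⟨hF₁, hF₂⟩, mul_mem ?_ ?_⟩
    · exact closure_mono (by simp) hxF₁
    · exact closure_mono (by simp) hyF₂

theorem exists_mem_generators_map_ne_one {G K : Type*} [Group G] [Group K] [Nontrivial K]
    {S : Set G} {φ : Subgroup.closure S →* K} (hφ : Surjective φ) :
    ∃ x : Subgroup.closure S, (x : G) ∈ S ∧ φ x ≠ 1 := by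
  by_contra! h
  have hker : φ.ker = ⊤ := by
    rw [eq_top_iff, ← Subgroup.closure_closure_coe_preimage, Subgroup.closure_le]
    exact fun x hx => h x hx
  obtain ⟨k, hk⟩ := exists_ne (1 : K)
  obtain ⟨x, rfl⟩ := hφ k
  exact hk (MonoidHom.mem_ker.mp (hker ▸ Subgroup.mem_top x))

namespace BurnsHale

variable {G : Type u} [Group G]

def signed (ε : G → Bool) (g : G) : G := cond (ε g) g g⁻¹

def admissibleSigns (S : Set G) : Set (G → Bool) :=
  {ε | (1 : G) ∉ Subsemigroup.closure (signed ε '' S)}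

theorem signed_eq_or_eq_inv (ε : G → Bool) (g : G) : signed ε g = g ∨ signed ε g = g⁻¹ := by
  cases h : ε g <;> simp [signed, h]

theorem map_signed {K : Type*} [Group K] (φ : G →* K) (ε : G → Bool) (g : G) :
    φ (signed ε g) = cond (ε g) (φ g) (φ g)⁻¹ := by
  cases h : ε g <;> simp [signed, h]

theorem map_signed_comp {H : Type*} [Group H] (f : H →* G) (ε : G → Bool) (h : H) :
    f (signed (ε ∘ f) h) = signed ε (f h) := by
  cases hε : ε (f h) <;> simp [signed, hε]

theorem admissibleSigns_anti {S T : Set G} (h : S ⊆ T) : admissibleSigns T ⊆ admissibleSigns S :=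
  fun _ hε hS => hε (Subsemigroup.closure_mono (Set.image_mono h) hS)

theorem admissibleSigns_empty : admissibleSigns (∅ : Set G) = Set.univ := by
  simp [admissibleSigns, Subsemigroup.notMem_bot]

theorem isClosed_admissibleSigns {S : Set G} (hS : S.Finite) :
    IsClosed (admissibleSigns S) := by
  have := hS.to_subtype
  let restrict : (G → Bool) → (S → Bool) := fun ε g => ε g
  have hrestrict : admissibleSigns S = restrict ⁻¹'
      {σ | (1 : G) ∉ Subsemigroup.closure (Set.range fun g : S => cond (σ g) (g : G) g⁻¹)} := by
    ext ε
    simp only [admissibleSigns, Set.image_eq_range]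
    rfl
  rw [hrestrict]
  have hcont : Continuous restrict := continuous_pi fun g => continuous_apply (g : G)
  exact (isClosed_discrete _).preimage hcont

theorem admissibleSigns_nonempty_of_finite {S : Set G}
    (h : ∀ F : Finset G, ↑F ⊆ S → (admissibleSigns (F : Set G)).Nonempty) :
    (admissibleSigns S).Nonempty := by
  classical
  let t : {F : Finset G // ↑F ⊆ S} → Set (G → Bool) := fun F => admissibleSigns (F : Set G)
  have htd : Directed (· ⊇ ·) t := fun F₁ F₂ =>
    ⟨⟨F₁ ∪ F₂, by simpa using ⟨F₁.2, F₂.2⟩⟩,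
      admissibleSigns_anti (by simp), admissibleSigns_anti (by simp)⟩
  have : Nonempty {F : Finset G // ↑F ⊆ S} := ⟨⟨∅, by simp⟩⟩
  have hclosed : ∀ F, IsClosed (t F) := fun F => isClosed_admissibleSigns F.1.finite_toSet
  obtain ⟨ε, hε⟩ := IsCompact.nonempty_iInter_of_directed_nonempty_isCompact_isClosed t htd
    (fun F => h F.1 F.2) (fun F => (hclosed F).isCompact) hclosed
  refine ⟨ε, fun h1 => ?_⟩
  obtain ⟨T, hTS, hT⟩ := Subsemigroup.exists_finset_subset_of_mem_closure h1
  obtain ⟨F, hFS, rfl⟩ := Finset.subset_set_image_iff.mp hTS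
  exact Set.mem_iInter.mp hε ⟨F, hFS⟩ (by simpa using hT)

theorem rightOrderable_of_forall_admissibleSigns_nonempty
    (h : ∀ F : Finset G, (1 : G) ∉ F → (admissibleSigns (F : Set G)).Nonempty) :
    RightOrderable G := by
  obtain ⟨ε, hε⟩ := admissibleSigns_nonempty_of_finite (S := {g : G | g ≠ 1})
    fun F hF => h F fun h1 => hF h1 rfl
  refine rightOrderable_of_positiveCone _ hε fun g hg => ?_
  have hmem : signed ε g ∈ Subsemigroup.closure (signed ε '' {g | g ≠ 1}) :=
    Subsemigroup.subset_closure ⟨g, hg, rfl⟩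
  rcases signed_eq_or_eq_inv ε g with h | h <;> rw [h] at hmem
  exacts [Or.inl hmem, Or.inr hmem]

theorem comp_mem_admissibleSigns_iff {H : Type*} [Group H] {f : H →* G} (hf : Injective f)
    (ε : G → Bool) (S : Set H) :
    ε ∘ f ∈ admissibleSigns S ↔ ε ∈ admissibleSigns (f '' S) := by
  have hmap : (Subsemigroup.closure (signed (ε ∘ f) '' S)).map f.toMulHom =
      Subsemigroup.closure (signed ε '' (f '' S)) := by
    rw [MulHom.map_mclosure, Set.image_image, Set.image_image]
    exact congrArg _ (Set.image_congr fun h _ => map_signed_comp f ε h)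
  have hinj : Injective f.toMulHom := hf
  rw [admissibleSigns, admissibleSigns, Set.mem_ofPred_eq, Set.mem_ofPred_eq, ← hmap,
    ← Subsemigroup.mem_map_iff_mem hinj, show f.toMulHom 1 = 1 from map_one f]

theorem admissibleSigns_nonempty_image_iff {H : Type*} [Group H] {f : H →* G} (hf : Injective f)
    (S : Set H) : (admissibleSigns (f '' S)).Nonempty ↔ (admissibleSigns S).Nonempty := by
  constructor
  · rintro ⟨ε, hε⟩
    exact ⟨ε ∘ f, (comp_mem_admissibleSigns_iff hf ε S).mpr hε⟩
  · rintro ⟨ε, hε⟩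
    refine ⟨extend f ε fun _ => true, (comp_mem_admissibleSigns_iff hf _ S).mp ?_⟩
    rwa [extend_comp hf]

theorem admissibleSigns_nonempty_of_inter_ker {K : Type*} [Group K] (hK : RightOrderable K)
    (φ : G →* K) (S : Set G) (h : (admissibleSigns (S ∩ φ.ker)).Nonempty) :
    (admissibleSigns S).Nonempty := by
  classical
  obtain ⟨lo, hlo⟩ := hK
  let _ : LinearOrder K := lo
  have : MulRightMono K := ⟨fun c a b hab => hlo a b c hab⟩
  obtain ⟨ε₀, hε₀⟩ := h
  set P₀ := Subsemigroup.closure (signed ε₀ '' (S ∩ φ.ker))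
  let ε : G → Bool := fun g => if φ g = 1 then ε₀ g else decide (1 < φ g)
  have hgen : ∀ g ∈ S, 1 ≤ φ (signed ε g) ∧ (φ (signed ε g) = 1 → signed ε g ∈ P₀) := by
    intro g hg
    by_cases hφg : φ g = 1
    · have hε : signed ε g = signed ε₀ g := by simp [signed, ε, hφg]
      rw [hε, map_signed, hφg]
      exact ⟨by cases ε₀ g <;> simp, fun _ => Subsemigroup.subset_closure ⟨g, ⟨hg, hφg⟩, rfl⟩⟩
    · rw [map_signed]
      rcases lt_or_gt_of_ne hφg with hlt | hgt
      · simp [ε, hφg, hlt.not_gt, Right.one_le_inv_iff.mpr hlt.le]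
      · simp [ε, hφg, hgt, hgt.le]
  have key : ∀ x ∈ Subsemigroup.closure (signed ε '' S), 1 ≤ φ x ∧ (φ x = 1 → x ∈ P₀) := by
    intro x hx
    induction hx using Subsemigroup.closure_induction with
    | mem x hx =>
      obtain ⟨g, hg, rfl⟩ := hx
      exact hgen g hg
    | mul x y _ _ hx hy =>
      refine ⟨by simpa using Right.one_le_mul hx.1 hy.1, fun hxy => ?_⟩
      rw [map_mul] at hxy
      have hx1 : φ x = 1 := le_antisymm
        (by simpa [eq_inv_of_mul_eq_one_left hxy] using Right.inv_le_one_iff.mpr hy.1) hx.1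
      rw [hx1, one_mul] at hxy
      exact mul_mem (hx.2 hx1) (hy.2 hxy)
  exact ⟨ε, fun h1 => hε₀ ((key 1 h1).2 (map_one φ))⟩

theorem admissibleSigns_nonempty_of_forall_fg
    (hyp : ∀ H : Subgroup G, H.FG → H ≠ ⊥ →
      ∃ (K : Type u) (_ : Group K), Nontrivial K ∧ RightOrderable K ∧
        ∃ f : H →* K, Surjective f)
    (S : Set G) (hS : S.Finite) (h1 : (1 : G) ∉ S) : (admissibleSigns S).Nonempty := by
  induction hn : S.ncard using Nat.strong_induction_on generalizing S with
  | _ n ih =>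
  rcases S.eq_empty_or_nonempty with rfl | ⟨g, hg⟩
  · simp [admissibleSigns_empty]
  set H := Subgroup.closure S
  have hH : H ≠ ⊥ := fun hbot => by
    have hgH : g ∈ H := Subgroup.subset_closure hg
    rw [hbot, Subgroup.mem_bot] at hgH
    exact h1 (hgH ▸ hg)
  obtain ⟨K, _, _, hK, φ, hφ⟩ := hyp H ⟨hS.toFinset, by simp [H]⟩ hH
  set T : Set H := H.subtype ⁻¹' S
  have hT : H.subtype '' T = S := Set.image_preimage_eq_of_subset <| by
    rw [Subgroup.coe_subtype, Subtype.range_coe]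
    exact Subgroup.subset_closure
  rw [← hT, admissibleSigns_nonempty_image_iff H.subtype_injective]
  apply admissibleSigns_nonempty_of_inter_ker hK φ
  rw [← admissibleSigns_nonempty_image_iff H.subtype_injective]
  have hsub : H.subtype '' (T ∩ φ.ker) ⊂ S := by
    refine (hT ▸ Set.image_mono Set.inter_subset_left).ssubset_of_not_subset fun hS' => ?_
    obtain ⟨x, hxS, hx⟩ := exists_mem_generators_map_ne_one hφ
    obtain ⟨y, hy, hyx⟩ := hS' hxS
    exact hx (H.subtype_injective hyx ▸ hy.2)
  exact ih _ (hn ▸ Set.ncard_lt_ncard hsub hS) _ (hS.subset hsub.subset)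
    (fun h => h1 (hsub.subset h)) rfl

end BurnsHale

/-- Burns–Hale: a group `G` is right orderable if and only if every nontrivial finitely
generated subgroup of `G` admits a surjective homomorphism onto some nontrivial right
orderable group. -/
theorem stmt_9 {G : Type u} [Group G] :
    RightOrderable G ↔
      ∀ H : Subgroup G, H.FG → H ≠ ⊥ →
        ∃ (K : Type u) (_ : Group K), Nontrivial K ∧ RightOrderable K ∧
          ∃ f : H →* K, Function.Surjective f := by
  constructor
  · intro hG H _ hH
    exact ⟨H, inferInstance, (Subgroup.nontrivial_iff_ne_bot H).2 hH,
      hG.of_injective H.subtype H.subtype_injective, MonoidHom.id H, surjective_id⟩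
  · intro hyp
    exact BurnsHale.rightOrderable_of_forall_admissibleSigns_nonempty fun F hF =>
      BurnsHale.admissibleSigns_nonempty_of_forall_fg hyp _ F.finite_toSet hF
end

section
/- If A and B are groups each having no element of order p (for a fixed prime p), then the free product A * B has no element of order p. -/
/-!
An element of finite order in a free product is conjugate into one of the factors. Write it as
a reduced word. If the first and last letters lie in different factors, the `n`-th power is the
reduced word obtained by concatenating `n` copies, so it is never `1`. Otherwise, conjugating by
the first letter merges it into the last one and gives a shorter word, and we conclude by
induction on the length. Conjugate elements have the same order, so an element of order `p` in
`A ∗ B` would give one in `A` or in `B`.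
-/

open Monoid Coprod

theorem IsConj.orderOf_eq {α : Type*} [Group α] {a b : α} (h : IsConj a b) :
    orderOf a = orderOf b := by
  obtain ⟨c, hc⟩ := h
  exact SemiconjBy.orderOf_eq _ hc

namespace Monoid.CoprodI

variable {ι : Type*} {G : ι → Type*} [∀ i, Group (G i)]

namespace Word

theorem eq_empty_of_prod_eq_one {w : Word G} (h : w.prod = 1) : w = empty := by
  classical
  exact equiv.symm.injective (h.trans prod_empty.symm)

theorem exists_toList_eq_flatten_replicate (w : Word G) (hne : w.toList ≠ [])
    (hcyc : ∀ a ∈ w.toList.getLast?, ∀ b ∈ w.toList.head?, a.1 ≠ b.1) (n : ℕ) :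
    ∃ w' : Word G, w'.toList = (List.replicate n w.toList).flatten ∧ w'.prod = w.prod ^ n := by
  refine ⟨⟨(List.replicate n w.toList).flatten, ?_, ?_⟩, rfl, ?_⟩
  · intro a ha
    obtain ⟨l, hl, ha⟩ := List.mem_flatten.mp ha
    exact w.ne_one a (List.eq_of_mem_replicate hl ▸ ha)
  · rw [List.isChain_flatten (fun h => hne (List.eq_of_mem_replicate h).symm)]
    exact ⟨fun l hl => List.eq_of_mem_replicate hl ▸ w.chain_ne,
      List.isChain_replicate_of_rel n hcyc⟩
  · simp only [prod, List.map_flatten, List.prod_flatten, List.map_replicate,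
      List.prod_replicate]

theorem not_isOfFinOrder_prod (w : Word G) (hne : w.toList ≠ [])
    (hcyc : ∀ a ∈ w.toList.getLast?, ∀ b ∈ w.toList.head?, a.1 ≠ b.1) :
    ¬IsOfFinOrder w.prod := by
  rw [isOfFinOrder_iff_pow_eq_one]
  rintro ⟨n, hn, hpow⟩
  obtain ⟨w', hw', hprod⟩ := w.exists_toList_eq_flatten_replicate hne hcyc n
  have : (List.replicate n w.toList).flatten = [] := by
    rw [← hw', eq_empty_of_prod_eq_one (hprod.trans hpow), empty_toList]
  simp [hn.ne', hne] at this

theorem exists_isConj_length_lt (w : Word G) {i : ι} (x y : G i) (c : List (Σ i, G i))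
    (hw : w.toList = ⟨i, x⟩ :: (c ++ [⟨i, y⟩])) :
    ∃ w' : Word G, IsConj w.prod w'.prod ∧ w'.toList.length < w.toList.length := by
  have hc_ne_one : ∀ a ∈ c, a.2 ≠ 1 := fun a ha => w.ne_one a (by simp [hw, ha])
  obtain ⟨hc_chain, -, hc_last⟩ := List.isChain_append.mp (hw ▸ w.chain_ne).tail
  have hconj : IsConj w.prod ((c.map fun a => of a.2).prod * of (y * x)) := by
    refine isConj_iff.2 ⟨(of x)⁻¹, ?_⟩
    simp [prod, hw]
    group
  by_cases hyx : y * x = 1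
  · exact ⟨⟨c, hc_ne_one, hc_chain⟩, by simpa [hyx, prod] using hconj, by simp [hw]⟩
  · refine ⟨⟨c ++ [⟨i, y * x⟩], ?_, ?_⟩, by simpa [prod] using hconj, by simp [hw]⟩
    · simp only [List.mem_append, List.mem_singleton]
      rintro a (ha | rfl)
      exacts [hc_ne_one a ha, hyx]
    · exact List.isChain_append.mpr ⟨hc_chain, List.isChain_singleton _,
        fun a ha b hb => by simpa [← Option.mem_some_iff.mp hb] using hc_last a ha _ rfl⟩

theorem eq_one_or_isConj_of_of_isOfFinOrder (w : Word G) (hw : IsOfFinOrder w.prod) :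
    w.prod = 1 ∨ ∃ i, ∃ x : G i, IsConj (of x) w.prod := by
  obtain ⟨l, hl⟩ : ∃ l, w.toList = l := ⟨_, rfl⟩
  induction l using List.bidirectionalRecOn with
  | H0 => exact .inl (by simp [prod, hl])
  | H1 a => exact .inr ⟨a.1, a.2, (by simp [prod, hl] : w.prod = of a.2) ▸ IsConj.refl _⟩
  | Hn a c b =>
    obtain ⟨i, x⟩ := a
    obtain ⟨j, y⟩ := b
    obtain rfl | hij := eq_or_ne j i
    · obtain ⟨w', hconj, hlt⟩ := w.exists_isConj_length_lt x y c hl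
      rcases eq_one_or_isConj_of_of_isOfFinOrder w' (hconj.isOfFinOrder hw) with h | ⟨k, z, hz⟩
      · exact .inl (isConj_one_left.mp (h ▸ hconj))
      · exact .inr ⟨k, z, hz.trans hconj.symm⟩
    · refine absurd hw (w.not_isOfFinOrder_prod (by simp [hl]) ?_)
      rw [hl, ← List.cons_append, List.getLast?_concat]
      simpa using hij
termination_by w.toList.length

end Word

theorem eq_one_or_isConj_of_of_isOfFinOrder {g : CoprodI G} (hg : IsOfFinOrder g) :
    g = 1 ∨ ∃ i, ∃ x : G i, IsConj (of x) g := by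
  classical
  have hprod : (Word.equiv g).prod = g := Word.equiv.symm_apply_apply g
  rw [← hprod] at hg ⊢
  exact (Word.equiv g).eq_one_or_isConj_of_of_isOfFinOrder hg

end Monoid.CoprodI

namespace Monoid.Coprod

universe u v

variable {A : Type u} {B : Type v} [Group A] [Group B]

/-- `CoprodI` needs a family in a single universe. -/
def liftedPair (A : Type u) (B : Type v) : Bool → Type max u v
  | true => ULift.{v} A
  | false => ULift.{u} B

instance : ∀ b, Group (liftedPair A B b)
  | true => inferInstanceAs (Group (ULift A))
  | false => inferInstanceAs (Group (ULift B))

def toCoprodI : A ∗ B →* CoprodI (liftedPair A B) :=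
  lift ((CoprodI.of (i := true)).comp MulEquiv.ulift.symm.toMonoidHom)
    ((CoprodI.of (i := false)).comp MulEquiv.ulift.symm.toMonoidHom)

def ofCoprodI : CoprodI (liftedPair A B) →* A ∗ B :=
  CoprodI.lift fun
    | true => inl.comp MulEquiv.ulift.toMonoidHom
    | false => inr.comp MulEquiv.ulift.toMonoidHom

theorem ofCoprodI_toCoprodI (g : A ∗ B) : ofCoprodI (toCoprodI g) = g := by
  induction g using Coprod.induction_on with
  | inl a => rfl
  | inr b => rfl
  | mul x y hx hy => rw [map_mul, map_mul, hx, hy]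

theorem eq_one_or_isConj_inl_or_isConj_inr_of_isOfFinOrder {g : A ∗ B} (hg : IsOfFinOrder g) :
    g = 1 ∨ (∃ a, IsConj (inl a) g) ∨ ∃ b, IsConj (inr b) g := by
  rcases CoprodI.eq_one_or_isConj_of_of_isOfFinOrder (toCoprodI.isOfFinOrder hg) with
    h | ⟨i, x, hx⟩
  · exact .inl (by rw [← ofCoprodI_toCoprodI g, h, map_one])
  · have := ofCoprodI_toCoprodI g ▸ ofCoprodI.map_isConj hx
    cases i
    · exact .inr (.inr ⟨x.down, this⟩)
    · exact .inr (.inl ⟨x.down, this⟩)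

end Monoid.Coprod

/-- If `A` and `B` have no elements of order `p` (a prime), then neither does the free
product `A ∗ B`. -/
theorem stmt_11 {A B : Type*} [Group A] [Group B] (p : ℕ) (hp : p.Prime)
    (hA : ∀ a : A, orderOf a ≠ p) (hB : ∀ b : B, orderOf b ≠ p) :
    ∀ g : A ∗ B, orderOf g ≠ p := by
  intro g hg
  have hfin : IsOfFinOrder g := orderOf_pos_iff.mp (hg ▸ hp.pos)
  rcases eq_one_or_isConj_inl_or_isConj_inr_of_isOfFinOrder hfin with
    rfl | ⟨a, ha⟩ | ⟨b, hb⟩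
  · rw [orderOf_one] at hg
    exact hp.ne_one hg.symm
  · apply hA a
    rw [← orderOf_injective (inl : A →* A ∗ B) inl_injective a, ha.orderOf_eq, hg]
  · apply hB b
    rw [← orderOf_injective (inr : B →* A ∗ B) inr_injective b, hb.orderOf_eq, hg]
end

section
/- Let G be a group acting on a tree such that every element of G is hyperbolic (fixes no vertex) and all nontrivial elements share a common axis on which they act by translations, the translation length function being ‖g‖ = min over vertices p of d(p, g·p). If x ∈ G \ {1} has minimal translation length, then G = ⟨x⟩ and G ≅ ℤ. -/
/-!
Since the translations along the common axis compose additively, reading off the shift of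
the axis is a homomorphism `G → ℤ`; it is injective because a nontrivial element fixes no
vertex. Its image is a subgroup of `ℤ`, so the Euclidean algorithm shows it is generated by
the shift of smallest absolute value, i.e. by the image of `x`.
-/

open Function

namespace AxisTranslation

variable {G V : Type*} [Group G] [MulAction G V] {a : ℤ → V}

theorem shift_unique (ha : Injective a) {g : G} {m m' : ℤ}
    (hm : ∀ n, g • a n = a (n + m)) (hm' : ∀ n, g • a n = a (n + m')) : m = m' := by
  have := ha ((hm 0).symm.trans (hm' 0))
  omega

noncomputable def shiftHom (ha : Injective a)
    (hshift : ∀ g : G, ∃ m : ℤ, ∀ n, g • a n = a (n + m)) : G →* Multiplicative ℤ where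
  toFun g := Multiplicative.ofAdd (hshift g).choose
  map_one' := by
    rw [shift_unique ha (hshift 1).choose_spec (m' := 0) (by simp)]
    rfl
  map_mul' g h := by
    have hgh : ∀ n, (g * h) • a n = a (n + ((hshift h).choose + (hshift g).choose)) := by
      intro n
      rw [mul_smul, (hshift h).choose_spec, (hshift g).choose_spec, add_assoc]
    rw [← ofAdd_add, shift_unique ha (hshift (g * h)).choose_spec hgh, add_comm]

variable (ha : Injective a) (hshift : ∀ g : G, ∃ m : ℤ, ∀ n, g • a n = a (n + m))

theorem shiftHom_apply {g : G} {m : ℤ} (hm : ∀ n, g • a n = a (n + m)) :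
    shiftHom ha hshift g = Multiplicative.ofAdd m :=
  congrArg Multiplicative.ofAdd (shift_unique ha (hshift g).choose_spec hm)

theorem shiftHom_injective (hfree : ∀ g : G, g ≠ 1 → ∀ v : V, g • v ≠ v) :
    Injective (shiftHom ha hshift) := by
  refine (injective_iff_map_eq_one _).2 fun g hg => ?_
  by_contra hne
  apply hfree g hne (a 0)
  have hzero : (hshift g).choose = 0 := ofAdd_eq_one.1 hg
  rw [(hshift g).choose_spec, hzero, add_zero]

end AxisTranslation

section IntValued

variable {G : Type*} [Group G] {f : G →* Multiplicative ℤ}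

theorem toAdd_ne_zero_of_injective (hf : Injective f) {x : G} (hx : x ≠ 1) :
    (f x).toAdd ≠ 0 :=
  fun h => hx (hf (by rw [map_one, ← ofAdd_toAdd (f x), h, ofAdd_zero]))

theorem mem_zpowers_of_natAbs_le (hf : Injective f) {x : G} (hx : x ≠ 1)
    (hmin : ∀ g : G, g ≠ 1 → (f x).toAdd.natAbs ≤ (f g).toAdd.natAbs) (g : G) :
    g ∈ Subgroup.zpowers x := by
  set q := (f g).toAdd / (f x).toAdd
  set r := (f g).toAdd % (f x).toAdd
  have hfx := toAdd_ne_zero_of_injective hf hx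
  have hdiv : (f g).toAdd = (f x).toAdd * q + r := (Int.mul_ediv_add_emod _ _).symm
  have hrem : f (g * x ^ (-q)) = Multiplicative.ofAdd r := by
    rw [map_mul, map_zpow, ← ofAdd_toAdd (f g * _), toAdd_mul, toAdd_zpow, smul_eq_mul]
    congr 1
    linear_combination hdiv
  have hr : r = 0 := by
    by_contra hr
    have hne : g * x ^ (-q) ≠ 1 := fun h => hr (ofAdd_eq_one.1 (by rw [← hrem, h, map_one]))
    have hle := hmin _ hne
    rw [hrem, toAdd_ofAdd] at hle
    have := Int.emod_lt (f g).toAdd hfx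
    have := Int.emod_nonneg (f g).toAdd hfx
    omega
  have : g * x ^ (-q) = 1 := hf (by rw [hrem, hr, map_one]; rfl)
  exact ⟨q, by rw [zpow_neg, mul_inv_eq_one] at this; exact this.symm⟩

theorem injective_zpow_of_injective (hf : Injective f) {x : G} (hx : x ≠ 1) :
    Injective fun n : ℤ => x ^ n := by
  intro k j hkj
  have := congrArg (fun g => (f g).toAdd) hkj
  simp only [map_zpow, toAdd_zpow, smul_eq_mul] at this
  exact mul_right_cancel₀ (toAdd_ne_zero_of_injective hf hx) this

end IntValued

theorem stmt_16_general {G V : Type*} [Group G] [MulAction G V]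
    (T : SimpleGraph V)
    (hyp : ∀ g : G, g ≠ 1 → ∀ v : V, g • v ≠ v)
    (a : ℤ → V) (hainj : Function.Injective a)
    (trans : ∀ g : G, ∃ m : ℤ, (∀ n : ℤ, g • a n = a (n + m)) ∧
      m.natAbs = sInf {d : ℕ | ∃ p : V, T.dist p (g • p) = d})
    (x : G) (hx : x ≠ 1)
    (hmin : ∀ g : G, g ≠ 1 →
      sInf {d : ℕ | ∃ p : V, T.dist p (x • p) = d} ≤
        sInf {d : ℕ | ∃ p : V, T.dist p (g • p) = d}) :
    (∀ g : G, g ∈ Subgroup.zpowers x) ∧ Nonempty (G ≃* Multiplicative ℤ) := by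
  have hshift : ∀ g : G, ∃ m : ℤ, ∀ n, g • a n = a (n + m) :=
    fun g => (trans g).imp fun _ => And.left
  set f := AxisTranslation.shiftHom hainj hshift
  have hf : Injective f := AxisTranslation.shiftHom_injective hainj hshift hyp
  have hlength : ∀ g : G, (f g).toAdd.natAbs = sInf {d : ℕ | ∃ p : V, T.dist p (g • p) = d} := by
    intro g
    obtain ⟨m, hm, hlen⟩ := trans g
    rw [AxisTranslation.shiftHom_apply hainj hshift hm, toAdd_ofAdd, hlen]
  have hgen : ∀ g : G, g ∈ Subgroup.zpowers x :=
    mem_zpowers_of_natAbs_le hf hx fun g hg => by simpa only [hlength] using hmin g hg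
  have : Infinite G := Infinite.of_injective _ (injective_zpow_of_injective hf hx)
  exact ⟨hgen, ⟨(intEquivOfZPowersEqTop x ((Subgroup.eq_top_iff' _).2 hgen)).symm⟩⟩

/-- Let `G` act on a tree `T` (by graph automorphisms) so that every nontrivial element
is hyperbolic (fixes no vertex), and suppose all elements act as translations on a common
axis (a bi-infinite geodesic `a : ℤ → V`), the translation length of `g` being
`‖g‖ = min over vertices p of d(p, g • p)`.  If `x ≠ 1` has minimal translation length,
then `G = ⟨x⟩` and `G ≅ ℤ`. -/
theorem stmt_16 {G V : Type*} [Group G] [MulAction G V]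
    (T : SimpleGraph V) (hconn : T.Connected) (hacyc : T.IsAcyclic)
    (hact : ∀ (g : G) (u v : V), T.Adj u v → T.Adj (g • u) (g • v))
    (hyp : ∀ g : G, g ≠ 1 → ∀ v : V, g • v ≠ v)
    (a : ℤ → V) (hainj : Function.Injective a) (haadj : ∀ n : ℤ, T.Adj (a n) (a (n + 1)))
    (trans : ∀ g : G, ∃ m : ℤ, (∀ n : ℤ, g • a n = a (n + m)) ∧
      m.natAbs = sInf {d : ℕ | ∃ p : V, T.dist p (g • p) = d})
    (x : G) (hx : x ≠ 1)
    (hmin : ∀ g : G, g ≠ 1 →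
      sInf {d : ℕ | ∃ p : V, T.dist p (x • p) = d} ≤
        sInf {d : ℕ | ∃ p : V, T.dist p (g • p) = d}) :
    (∀ g : G, g ∈ Subgroup.zpowers x) ∧ Nonempty (G ≃* Multiplicative ℤ) :=
  stmt_16_general T hyp a hainj trans x hx hmin
end
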